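/- With the ensemble V of diagonalizing unitaries fixing |ψ*⟩ (V = |ψ*⟩⟨ψ*| + P W P with W Haar-random on the orthogonal complement P of |ψ*⟩), the local loss L(θ) = ⟨ψ(θ)|V†HV|ψ(θ)⟩ satisfies E_V[∇L at θ*] = 0 and Var_V[∂_μ L at θ*] = ((⟨H²⟩_* − ⟨H⟩_*²)/(d−1)) F_μμ*, where ⟨·⟩_* = ⟨ψ*|·|ψ*⟩ and F* is the QFI matrix at θ*. -/

import Mathlib

open MeasureTheory Matrix Complex

noncomputable section

instance matrixMeasurableSpace {m n : Type*} : MeasurableSpace (Matrix m n ℂ) :=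
  (inferInstance : MeasurableSpace (m → n → ℂ))

/-!
At `θ*`, for `V` fixing `ψ*`, the derivative of the loss is `2 Re ⟨a|Vφ⟩` with `a = P H ψ*` and
`φ = P ∂ψ`, both in `ψ*⊥` (this uses `Re ⟨ψ*|∂ψ⟩ = 0`). The law of `V` is invariant under the
stabilizer unitaries `Q + c P` with `|c| = 1`, which act on `Vφ ∈ ψ*⊥` as multiplication by `c`.
Taking `c = -1` and `c = i` shows that `⟨a|Vφ⟩` and `⟨a|Vφ⟩²` have mean zero, so the mean gradient
vanishes and the variance is `2 E|⟨a|Vφ⟩|²`. The second-moment matrix `E[Vφ (Vφ)†]` annihilates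
`ψ*` and commutes with the reflections of `ψ*⊥`, so it is a multiple of `P`, and its trace `|φ|²`
makes the multiple `|φ|²/(d-1)`. Finally `|a|² = ⟨H²⟩ - ⟨H⟩²` and `2|φ|² = F`.
-/

open scoped ComplexOrder

section UnitaryGroup

instance {m n : Type*} [Fintype m] [Fintype n] : BorelSpace (Matrix m n ℂ) :=
  inferInstanceAs (BorelSpace (m → n → ℂ))

instance {m n : Type*} [Finite m] [Finite n] : SecondCountableTopology (Matrix m n ℂ) :=
  inferInstanceAs (SecondCountableTopology (m → n → ℂ))

variable {n : Type*} [Fintype n] [DecidableEq n]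

instance : SecondCountableTopology (unitaryGroup n ℂ) :=
  TopologicalSpace.Subtype.secondCountableTopology _

instance : CompactSpace (unitaryGroup n ℂ) := by
  refine isCompact_iff_compactSpace.mp (IsCompact.of_isClosed_subset
    (isCompact_univ_pi fun _ => isCompact_univ_pi fun _ => isCompact_closedBall (0 : ℂ) 1)
    ?_ fun U hU => ?_)
  · have h₁ : IsClosed {U : Matrix n n ℂ | star U * U = 1} :=
      isClosed_eq (by fun_prop) (by fun_prop)
    have h₂ : IsClosed {U : Matrix n n ℂ | U * star U = 1} :=
      isClosed_eq (by fun_prop) (by fun_prop)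
    exact h₁.inter h₂
  · exact Set.mem_univ_pi.mpr fun i => Set.mem_univ_pi.mpr fun j =>
      mem_closedBall_zero_iff.mpr (entry_norm_bound_of_unitary hU i j)

theorem Matrix.star_mulVec_dotProduct_mulVec {U : Matrix n n ℂ} (hU : U ∈ unitaryGroup n ℂ)
    (x y : n → ℂ) : star (U *ᵥ x) ⬝ᵥ U *ᵥ y = star x ⬝ᵥ y := by
  rw [star_mulVec, ← dotProduct_mulVec, mulVec_mulVec, ← star_eq_conjTranspose,
    Unitary.star_mul_self_of_mem hU, one_mulVec]

end UnitaryGroup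

theorem Continuous.integrable_of_compactSpace {X E : Type*} [TopologicalSpace X] [CompactSpace X]
    [MeasurableSpace X] [OpensMeasurableSpace X] [NormedAddCommGroup E] {μ : Measure X}
    [IsFiniteMeasure μ] {f : X → E} (hf : Continuous f) : Integrable f μ :=
  hf.integrable_of_hasCompactSupport (.of_compactSpace f)

theorem integral_complex_re {X : Type*} [MeasurableSpace X] {μ : Measure X} {f : X → ℂ}
    (hf : Integrable f μ) : ∫ x, (f x).re ∂μ = (∫ x, f x ∂μ).re :=
  integral_re hf

section PhaseShift

variable {K R : Type*} [CommRing K] [Ring R] [Algebra K R] {p q : R}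

theorem one_add_smul_mul_eq_self (hpq : p * q = 0) (k : K) : (1 + k • p) * q = q := by
  rw [add_mul, one_mul, smul_mul_assoc, hpq, smul_zero, add_zero]

theorem mul_one_add_smul_eq_self (hqp : q * p = 0) (k : K) : q * (1 + k • p) = q := by
  rw [mul_add, mul_one, mul_smul_comm, hqp, smul_zero, add_zero]

theorem IsStarProjection.one_add_smul_mem_unitary [StarRing K] [StarRing R] [StarModule K R]
    (hp : IsStarProjection p) {c : K} (hc : c ∈ unitary K) : 1 + (c - 1) • p ∈ unitary R := by
  have hstar : star (1 + (c - 1) • p) = 1 + (star c - 1) • p := by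
    rw [star_add, star_one, star_smul, hp.isSelfAdjoint.star_eq, star_sub, star_one]
  have hmul : ∀ x y : K, (1 + x • p) * (1 + y • p) = 1 + (x + y + x * y) • p := fun x y => by
    simp only [mul_add, add_mul, one_mul, mul_one, smul_mul_smul_comm, hp.isIdempotentElem.eq,
      add_smul]
    abel
  have h₁ : (star c - 1) + (c - 1) + (star c - 1) * (c - 1) = 0 := by
    linear_combination Unitary.star_mul_self_of_mem hc
  have h₂ : (c - 1) + (star c - 1) + (c - 1) * (star c - 1) = 0 := by
    linear_combination Unitary.mul_star_self_of_mem hc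
  rw [Unitary.mem_iff, hstar, hmul, hmul, h₁, h₂, zero_smul, add_zero]
  exact ⟨rfl, rfl⟩

end PhaseShift

section Projection

variable {n 𝕜 : Type*} [Fintype n] [Field 𝕜] [StarRing 𝕜] {ψ : n → 𝕜}

theorem Matrix.isStarProjection_inv_smul_vecMulVec (u : n → 𝕜) :
    IsStarProjection ((star u ⬝ᵥ u)⁻¹ • vecMulVec u (star u)) := by
  constructor
  · by_cases h : star u ⬝ᵥ u = 0
    · simp [IsIdempotentElem, h]
    · rw [IsIdempotentElem, smul_mul_smul_comm, vecMulVec_mul_vecMulVec, vecMulVec_smul,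
        smul_smul]
      congr 1
      field_simp
  · rw [IsSelfAdjoint, star_smul, star_inv₀, ← star_dotProduct, star_eq_conjTranspose,
      conjTranspose_vecMulVec, star_star]

theorem Matrix.isStarProjection_vecMulVec (hψ : star ψ ⬝ᵥ ψ = 1) :
    IsStarProjection (vecMulVec ψ (star ψ)) := by
  simpa [hψ] using isStarProjection_inv_smul_vecMulVec ψ

theorem Matrix.mulVec_eq_self_of_mul_vecMulVec {V : Matrix n n 𝕜} (hψ : star ψ ⬝ᵥ ψ = 1)
    (hV : V * vecMulVec ψ (star ψ) = vecMulVec ψ (star ψ)) : V *ᵥ ψ = ψ := by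
  have h : vecMulVec ψ (star ψ) *ᵥ ψ = ψ := by simp [vecMulVec_mulVec, hψ]
  rw [← h, mulVec_mulVec, hV]

theorem Matrix.star_dotProduct_mulVec_of_vecMulVec_mul {V : Matrix n n 𝕜}
    (hψ : star ψ ⬝ᵥ ψ = 1) (hV : vecMulVec ψ (star ψ) * V = vecMulVec ψ (star ψ)) (x : n → 𝕜) :
    star ψ ⬝ᵥ V *ᵥ x = star ψ ⬝ᵥ x := by
  have h : star ψ ᵥ* vecMulVec ψ (star ψ) = star ψ := by simp [vecMul_vecMulVec, hψ]
  rw [dotProduct_mulVec, ← h, vecMul_vecMul, hV]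

variable [DecidableEq n]

theorem Matrix.one_sub_vecMulVec_mulVec (x : n → 𝕜) :
    (1 - vecMulVec ψ (star ψ)) *ᵥ x = x - (star ψ ⬝ᵥ x) • ψ := by
  simp [sub_mulVec, vecMulVec_mulVec]

theorem Matrix.star_dotProduct_one_sub_vecMulVec_mulVec (hψ : star ψ ⬝ᵥ ψ = 1) (x : n → 𝕜) :
    star ψ ⬝ᵥ (1 - vecMulVec ψ (star ψ)) *ᵥ x = 0 := by
  simp [one_sub_vecMulVec_mulVec, dotProduct_sub, hψ]

theorem Matrix.one_sub_vecMulVec_mulVec_of_dotProduct_eq_zero {x : n → 𝕜}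
    (hx : star ψ ⬝ᵥ x = 0) : (1 - vecMulVec ψ (star ψ)) *ᵥ x = x := by
  simp [one_sub_vecMulVec_mulVec, hx]

end Projection

section ComplexProjection

variable {n : Type*} [Fintype n]

theorem Matrix.ofReal_re_star_dotProduct_self (x : n → ℂ) :
    ((star x ⬝ᵥ x).re : ℂ) = star x ⬝ᵥ x := by
  refine Complex.ext rfl ?_
  simp [dotProduct, im_sum, mul_comm]

variable [DecidableEq n] {ψ : n → ℂ}

theorem Matrix.re_star_dotProduct_one_sub_vecMulVec_mulVec_self (hψ : star ψ ⬝ᵥ ψ = 1)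
    (x : n → ℂ) :
    (star ((1 - vecMulVec ψ (star ψ)) *ᵥ x) ⬝ᵥ (1 - vecMulVec ψ (star ψ)) *ᵥ x).re =
      (star x ⬝ᵥ x).re - normSq (star x ⬝ᵥ ψ) := by
  have hc : star x ⬝ᵥ ψ = star (star ψ ⬝ᵥ x) := star_dotProduct x ψ
  rw [one_sub_vecMulVec_mulVec, star_sub, star_smul, hc]
  simp only [sub_dotProduct, dotProduct_sub, smul_dotProduct, dotProduct_smul, hψ, hc,
    smul_eq_mul, mul_one, star_def]
  rw [sub_self, mul_zero, sub_zero, sub_re, ← normSq_eq_conj_mul_self, ofReal_re, normSq_conj]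

theorem Matrix.IsHermitian.re_star_dotProduct_one_sub_vecMulVec_mulVec_self {H : Matrix n n ℂ}
    (hH : H.IsHermitian) (hψ : star ψ ⬝ᵥ ψ = 1) :
    (star ((1 - vecMulVec ψ (star ψ)) *ᵥ H *ᵥ ψ) ⬝ᵥ (1 - vecMulVec ψ (star ψ)) *ᵥ H *ᵥ ψ).re =
      (star ψ ⬝ᵥ (H * H) *ᵥ ψ).re - (star ψ ⬝ᵥ H *ᵥ ψ).re ^ 2 := by
  rw [Matrix.re_star_dotProduct_one_sub_vecMulVec_mulVec_self hψ, star_mulVec, hH.eq,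
    ← dotProduct_mulVec, ← dotProduct_mulVec, mulVec_mulVec, normSq_apply,
    show (star ψ ⬝ᵥ H *ᵥ ψ).im = 0 from hH.im_star_dotProduct_mulVec_self ψ]
  ring

/-- Every `u ⊥ ψ` is an eigenvector of `M`, so `M` is a homothety on `ψ⊥`. -/
theorem Matrix.exists_eq_smul_one_sub_vecMulVec {M : Matrix n n ℂ} (hψ : star ψ ⬝ᵥ ψ = 1)
    (hMψ : M *ᵥ ψ = 0)
    (hM : ∀ u, star ψ ⬝ᵥ u = 0 → Commute ((star u ⬝ᵥ u)⁻¹ • vecMulVec u (star u)) M) :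
    ∃ c : ℂ, M = c • (1 - vecMulVec ψ (star ψ)) := by
  set P := 1 - vecMulVec ψ (star ψ)
  have heig : ∀ u, star ψ ⬝ᵥ u = 0 →
      M *ᵥ u = ((star u ⬝ᵥ u)⁻¹ * (star u ⬝ᵥ M *ᵥ u)) • u := by
    intro u hu
    rcases eq_or_ne u 0 with rfl | hu0
    · simp
    have hs : star u ⬝ᵥ u ≠ 0 := dotProduct_star_self_eq_zero.not.mpr hu0
    have h := congrArg (· *ᵥ u) (hM u hu).eq
    simp only [← mulVec_mulVec, smul_mulVec, vecMulVec_mulVec, op_smul_eq_smul, smul_smul,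
      inv_mul_cancel₀ hs, one_smul] at h
    exact h.symm
  have hPy : ∀ y, star ψ ⬝ᵥ P *ᵥ y = 0 := star_dotProduct_one_sub_vecMulVec_mulVec hψ
  have hW : ∀ x ∈ LinearMap.range (toLin' P), toLin' M x ∈ LinearMap.range (toLin' P) := by
    rintro _ ⟨y, rfl⟩
    rw [toLin'_apply, toLin'_apply, heig _ (hPy y)]
    exact Submodule.smul_mem _ _ (LinearMap.mem_range_self _ y)
  obtain ⟨c, hc⟩ := LinearMap.exists_eq_smul_id_of_forall_notLinearIndependent
    (f := (toLin' M).restrict hW) fun ⟨_, y, rfl⟩ hli => by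
      have := LinearIndependent.pair_iff.mp hli
        ((star (P *ᵥ y) ⬝ᵥ P *ᵥ y)⁻¹ * (star (P *ᵥ y) ⬝ᵥ M *ᵥ P *ᵥ y)) (-1) (by
          ext1
          simp only [toLin'_apply, SetLike.mk_smul_mk, neg_smul, one_smul, Submodule.coe_add,
            NegMemClass.coe_neg, LinearMap.coe_restrict_apply, ZeroMemClass.coe_zero]
          rw [← heig _ (hPy y), add_neg_cancel])
      simp at this
  refine ⟨c, ext_iff_mulVec.mpr fun x => ?_⟩
  have hx : M *ᵥ x = M *ᵥ P *ᵥ x := by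
    rw [one_sub_vecMulVec_mulVec, mulVec_sub, mulVec_smul, hMψ, smul_zero, sub_zero]
  have := congrArg Subtype.val (LinearMap.congr_fun hc ⟨P *ᵥ x, x, rfl⟩)
  simpa [hx, smul_mulVec] using this

theorem Matrix.ext_star_dotProduct_mulVec {A B : Matrix n n ℂ}
    (h : ∀ a b : n → ℂ, star a ⬝ᵥ A *ᵥ b = star a ⬝ᵥ B *ᵥ b) : A = B := by
  ext i j
  simpa using h (Pi.single i 1) (Pi.single j 1)

end ComplexProjection

section Stabilizer

variable {n : Type*} [Fintype n] [DecidableEq n]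

/-- With `Q = |ψ*⟩⟨ψ*|` this is the ensemble `V = Q + P W P`, `W` Haar-random on `ψ*⊥`. -/
structure IsStabilizerHaar (μ : Measure (unitaryGroup n ℂ)) (Q : Matrix n n ℂ) : Prop where
  ae_fixes : ∀ᵐ (V : unitaryGroup n ℂ) ∂μ,
    (V : Matrix n n ℂ) * Q = Q ∧ Q * (V : Matrix n n ℂ) = Q
  map_mul_left : ∀ U : unitaryGroup n ℂ, (U : Matrix n n ℂ) * Q = Q →
    Q * (U : Matrix n n ℂ) = Q → μ.map (U * ·) = μ

variable {μ : Measure (unitaryGroup n ℂ)} {ψ φ : n → ℂ}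

theorem IsStabilizerHaar.integral_comp_mul_left {Q : Matrix n n ℂ} (hμ : IsStabilizerHaar μ Q)
    {U : unitaryGroup n ℂ} (hUQ : (U : Matrix n n ℂ) * Q = Q) (hQU : Q * (U : Matrix n n ℂ) = Q)
    {E : Type*} [NormedAddCommGroup E] [NormedSpace ℝ E] {f : unitaryGroup n ℂ → E}
    (hf : Continuous f) : ∫ V, f (U * V) ∂μ = ∫ V, f V ∂μ := by
  conv_rhs => rw [← hμ.map_mul_left U hUQ hQU]
  exact (integral_map (by fun_prop) hf.aestronglyMeasurable).symm

theorem IsStabilizerHaar.ae_star_dotProduct_mulVec_eq_zero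
    (hμ : IsStabilizerHaar μ (vecMulVec ψ (star ψ))) (hψ : star ψ ⬝ᵥ ψ = 1)
    (hφ : star ψ ⬝ᵥ φ = 0) :
    ∀ᵐ (V : unitaryGroup n ℂ) ∂μ, star ψ ⬝ᵥ (V : Matrix n n ℂ) *ᵥ φ = 0 := by
  filter_upwards [hμ.ae_fixes] with V hV
  rw [star_dotProduct_mulVec_of_vecMulVec_mul hψ hV.2, hφ]

theorem IsStabilizerHaar.integral_comp_smul_mulVec
    (hμ : IsStabilizerHaar μ (vecMulVec ψ (star ψ))) (hψ : star ψ ⬝ᵥ ψ = 1)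
    (hφ : star ψ ⬝ᵥ φ = 0) {c : ℂ} (hc : c ∈ unitary ℂ) {E : Type*} [NormedAddCommGroup E]
    [NormedSpace ℝ E] {f : (n → ℂ) → E} (hf : Continuous f) :
    ∫ V, f (c • (V : Matrix n n ℂ) *ᵥ φ) ∂μ = ∫ V, f ((V : Matrix n n ℂ) *ᵥ φ) ∂μ := by
  have hQ := isStarProjection_vecMulVec hψ
  let U : unitaryGroup n ℂ := ⟨1 + (c - 1) • (1 - vecMulVec ψ (star ψ)),
    hQ.one_sub.one_add_smul_mem_unitary hc⟩
  rw [← hμ.integral_comp_mul_left (U := U) (one_add_smul_mul_eq_self hQ.one_sub_mul_self _)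
    (mul_one_add_smul_eq_self hQ.mul_one_sub_self _)
    (f := fun V => f ((V : Matrix n n ℂ) *ᵥ φ)) (by fun_prop)]
  refine integral_congr_ae ?_
  filter_upwards [hμ.ae_star_dotProduct_mulVec_eq_zero hψ hφ] with V hV
  rw [Submonoid.coe_mul, ← mulVec_mulVec, add_mulVec, one_mulVec, smul_mulVec,
    one_sub_vecMulVec_mulVec_of_dotProduct_eq_zero hV, sub_smul, one_smul, add_sub_cancel]

theorem IsStabilizerHaar.integral_star_dotProduct_mulVec_eq_zero
    (hμ : IsStabilizerHaar μ (vecMulVec ψ (star ψ))) (hψ : star ψ ⬝ᵥ ψ = 1)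
    (hφ : star ψ ⬝ᵥ φ = 0) (a : n → ℂ) : ∫ V, star a ⬝ᵥ (V : Matrix n n ℂ) *ᵥ φ ∂μ = 0 := by
  have h := hμ.integral_comp_smul_mulVec hψ hφ (c := -1) (by simp [Unitary.mem_iff])
    (f := fun w => star a ⬝ᵥ w) (by fun_prop)
  simp only [neg_one_smul, dotProduct_neg, integral_neg] at h
  linear_combination (-1 / 2 : ℂ) * h

theorem IsStabilizerHaar.integral_star_dotProduct_mulVec_sq_eq_zero
    (hμ : IsStabilizerHaar μ (vecMulVec ψ (star ψ))) (hψ : star ψ ⬝ᵥ ψ = 1)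
    (hφ : star ψ ⬝ᵥ φ = 0) (a : n → ℂ) :
    ∫ V, (star a ⬝ᵥ (V : Matrix n n ℂ) *ᵥ φ) ^ 2 ∂μ = 0 := by
  have h := hμ.integral_comp_smul_mulVec hψ hφ (c := I)
    (by simp [Unitary.mem_iff, conj_I]) (f := fun w => (star a ⬝ᵥ w) ^ 2) (by fun_prop)
  simp only [dotProduct_smul, smul_eq_mul, mul_pow, I_sq, neg_one_mul, integral_neg] at h
  linear_combination (-1 / 2 : ℂ) * h

end Stabilizer

section SecondMoment

variable {n : Type*} [Fintype n] [DecidableEq n] {μ : Measure (unitaryGroup n ℂ)} {ψ φ : n → ℂ}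

variable (μ φ) in
def secondMoment : Matrix n n ℂ :=
  of fun i j => ∫ V, ((V : Matrix n n ℂ) *ᵥ φ) i * star (((V : Matrix n n ℂ) *ᵥ φ) j) ∂μ

theorem star_dotProduct_secondMoment_mulVec [IsFiniteMeasure μ] (a b : n → ℂ) :
    star a ⬝ᵥ secondMoment μ φ *ᵥ b =
      ∫ V, (star a ⬝ᵥ (V : Matrix n n ℂ) *ᵥ φ) * (star ((V : Matrix n n ℂ) *ᵥ φ) ⬝ᵥ b) ∂μ := by
  have hint : ∀ i j, Integrable (fun V : unitaryGroup n ℂ =>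
      star a i * (((V : Matrix n n ℂ) *ᵥ φ) i * star (((V : Matrix n n ℂ) *ᵥ φ) j) * b j)) μ :=
    fun i j => Continuous.integrable_of_compactSpace (by fun_prop)
  have hexpand : ∀ w : n → ℂ, (star a ⬝ᵥ w) * (star w ⬝ᵥ b) =
      ∑ i, ∑ j, star a i * (w i * star (w j) * b j) := fun w => by
    simp only [dotProduct, Finset.sum_mul_sum, Pi.star_apply]
    exact Finset.sum_congr rfl fun i _ => Finset.sum_congr rfl fun j _ => by ring
  simp only [hexpand]
  rw [integral_finsetSum _ fun i _ => integrable_finsetSum _ fun j _ => hint i j]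
  conv_lhs => simp only [dotProduct, mulVec, Finset.mul_sum]
  refine Finset.sum_congr rfl fun i _ => ?_
  rw [integral_finsetSum _ fun j _ => hint i j]
  refine Finset.sum_congr rfl fun j _ => ?_
  rw [integral_const_mul, integral_mul_const]
  rfl

theorem trace_secondMoment [IsProbabilityMeasure μ] :
    trace (secondMoment μ φ) = star φ ⬝ᵥ φ := by
  have hint : ∀ i, Integrable (fun V : unitaryGroup n ℂ =>
      ((V : Matrix n n ℂ) *ᵥ φ) i * star (((V : Matrix n n ℂ) *ᵥ φ) i)) μ :=
    fun i => Continuous.integrable_of_compactSpace (by fun_prop)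
  calc trace (secondMoment μ φ)
      = ∫ V, star ((V : Matrix n n ℂ) *ᵥ φ) ⬝ᵥ (V : Matrix n n ℂ) *ᵥ φ ∂μ := by
        simp only [trace, diag, secondMoment, of_apply, dotProduct, Pi.star_apply]
        rw [← integral_finsetSum _ fun i _ => hint i]
        simp only [mul_comm]
    _ = star φ ⬝ᵥ φ := by simp [star_mulVec_dotProduct_mulVec]

theorem IsStabilizerHaar.conj_secondMoment {Q : Matrix n n ℂ} (hμ : IsStabilizerHaar μ Q)
    [IsFiniteMeasure μ] {U : unitaryGroup n ℂ} (hUQ : (U : Matrix n n ℂ) * Q = Q)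
    (hQU : Q * (U : Matrix n n ℂ) = Q) :
    (U : Matrix n n ℂ) * secondMoment μ φ * (U : Matrix n n ℂ)ᴴ = secondMoment μ φ := by
  refine ext_star_dotProduct_mulVec fun a b => ?_
  have hleft : ∀ x, star ((U : Matrix n n ℂ)ᴴ *ᵥ a) ⬝ᵥ x = star a ⬝ᵥ (U : Matrix n n ℂ) *ᵥ x :=
    fun x => by rw [star_mulVec, conjTranspose_conjTranspose, dotProduct_mulVec]
  have hright : ∀ x, star x ⬝ᵥ (U : Matrix n n ℂ)ᴴ *ᵥ b =
      star ((U : Matrix n n ℂ) *ᵥ x) ⬝ᵥ b :=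
    fun x => by rw [star_mulVec, dotProduct_mulVec]
  rw [← mulVec_mulVec, ← mulVec_mulVec, dotProduct_mulVec, ← conjTranspose_conjTranspose
    (U : Matrix n n ℂ), ← star_mulVec, conjTranspose_conjTranspose,
    star_dotProduct_secondMoment_mulVec, star_dotProduct_secondMoment_mulVec]
  simp only [hleft, hright, mulVec_mulVec]
  exact hμ.integral_comp_mul_left hUQ hQU
    (f := fun V => (star a ⬝ᵥ (V : Matrix n n ℂ) *ᵥ φ) * (star ((V : Matrix n n ℂ) *ᵥ φ) ⬝ᵥ b))
    (by fun_prop)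

theorem IsStabilizerHaar.secondMoment_mulVec_eq_zero [IsFiniteMeasure μ]
    (hμ : IsStabilizerHaar μ (vecMulVec ψ (star ψ))) (hψ : star ψ ⬝ᵥ ψ = 1)
    (hφ : star ψ ⬝ᵥ φ = 0) : secondMoment μ φ *ᵥ ψ = 0 := by
  rw [← dotProduct_star_self_eq_zero, star_dotProduct_secondMoment_mulVec]
  refine integral_eq_zero_of_ae ?_
  filter_upwards [hμ.ae_star_dotProduct_mulVec_eq_zero hψ hφ] with V hV
  rw [star_dotProduct _ ψ, hV, star_zero, mul_zero, Pi.zero_apply]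

theorem IsStabilizerHaar.commute_secondMoment [IsFiniteMeasure μ]
    (hμ : IsStabilizerHaar μ (vecMulVec ψ (star ψ))) {u : n → ℂ} (hu : star ψ ⬝ᵥ u = 0) :
    Commute ((star u ⬝ᵥ u)⁻¹ • vecMulVec u (star u)) (secondMoment μ φ) := by
  set E := (star u ⬝ᵥ u)⁻¹ • vecMulVec u (star u)
  have hu' : star u ⬝ᵥ ψ = 0 := by rw [star_dotProduct, hu, star_zero]
  have hEQ : E * vecMulVec ψ (star ψ) = 0 := by simp [E, vecMulVec_mul_vecMulVec, hu']
  have hQE : vecMulVec ψ (star ψ) * E = 0 := by simp [E, vecMulVec_mul_vecMulVec, hu]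
  let U : unitaryGroup n ℂ := ⟨1 + (-1 - 1 : ℂ) • E,
    (isStarProjection_inv_smul_vecMulVec u).one_add_smul_mem_unitary (by simp [Unitary.mem_iff])⟩
  have hUM : Commute (U : Matrix n n ℂ) (secondMoment μ φ) :=
    calc (U : Matrix n n ℂ) * secondMoment μ φ
        = (U : Matrix n n ℂ) * secondMoment μ φ * ((U : Matrix n n ℂ)ᴴ * U) := by
          rw [← star_eq_conjTranspose, Unitary.star_mul_self_of_mem U.2, mul_one]
      _ = secondMoment μ φ * U := by
          rw [← mul_assoc, hμ.conj_secondMoment (one_add_smul_mul_eq_self hEQ _)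
            (mul_one_add_smul_eq_self hQE _)]
  have hE : (-1 / 2 : ℂ) • ((U : Matrix n n ℂ) - 1) = E := by
    rw [show (U : Matrix n n ℂ) = 1 + (-1 - 1 : ℂ) • E from rfl, add_sub_cancel_left, smul_smul]
    norm_num
  simpa only [hE] using (hUM.sub_left (Commute.one_left _)).smul_left (-1 / 2 : ℂ)

theorem IsStabilizerHaar.secondMoment_eq [IsProbabilityMeasure μ]
    (hμ : IsStabilizerHaar μ (vecMulVec ψ (star ψ))) (hψ : star ψ ⬝ᵥ ψ = 1)
    (hφ : star ψ ⬝ᵥ φ = 0) (hn : 2 ≤ Fintype.card n) :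
    secondMoment μ φ = ((star φ ⬝ᵥ φ) / (Fintype.card n - 1)) • (1 - vecMulVec ψ (star ψ)) := by
  obtain ⟨c, hc⟩ := exists_eq_smul_one_sub_vecMulVec hψ (hμ.secondMoment_mulVec_eq_zero hψ hφ)
    fun u hu => hμ.commute_secondMoment hu
  have htr := congrArg trace hc
  rw [trace_secondMoment, trace_smul, trace_sub, trace_one, trace_vecMulVec, dotProduct_comm ψ,
    hψ, smul_eq_mul] at htr
  have hn' : (Fintype.card n : ℂ) - 1 ≠ 0 := by
    rw [sub_ne_zero, ne_eq, Nat.cast_eq_one]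
    omega
  rw [hc, htr, mul_div_cancel_right₀ _ hn']

theorem IsStabilizerHaar.integral_normSq_star_dotProduct_mulVec [IsProbabilityMeasure μ]
    (hμ : IsStabilizerHaar μ (vecMulVec ψ (star ψ))) (hψ : star ψ ⬝ᵥ ψ = 1)
    (hφ : star ψ ⬝ᵥ φ = 0) (hn : 2 ≤ Fintype.card n) {a : n → ℂ} (ha : star ψ ⬝ᵥ a = 0) :
    ∫ V, normSq (star a ⬝ᵥ (V : Matrix n n ℂ) *ᵥ φ) ∂μ =
      (star φ ⬝ᵥ φ).re * (star a ⬝ᵥ a).re / (Fintype.card n - 1) := by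
  have h := star_dotProduct_secondMoment_mulVec (μ := μ) (φ := φ) a a
  rw [hμ.secondMoment_eq hψ hφ hn, smul_mulVec,
    one_sub_vecMulVec_mulVec_of_dotProduct_eq_zero ha, dotProduct_smul, smul_eq_mul] at h
  apply ofReal_injective
  rw [← integral_complex_ofReal, ofReal_div, ofReal_mul, ofReal_re_star_dotProduct_self,
    ofReal_re_star_dotProduct_self, ofReal_sub, ofReal_natCast, ofReal_one,
    ← div_mul_eq_mul_div, h]
  refine integral_congr_ae (ae_of_all _ fun V => ?_)
  simp only [star_dotProduct _ a, star_def, mul_conj]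

theorem IsStabilizerHaar.integral_two_mul_re_star_dotProduct_mulVec [IsFiniteMeasure μ]
    (hμ : IsStabilizerHaar μ (vecMulVec ψ (star ψ))) (hψ : star ψ ⬝ᵥ ψ = 1)
    (hφ : star ψ ⬝ᵥ φ = 0) (a : n → ℂ) :
    ∫ V, 2 * (star a ⬝ᵥ (V : Matrix n n ℂ) *ᵥ φ).re ∂μ = 0 := by
  rw [integral_const_mul,
    integral_complex_re (Continuous.integrable_of_compactSpace (by fun_prop)),
    hμ.integral_star_dotProduct_mulVec_eq_zero hψ hφ, zero_re, mul_zero]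

theorem IsStabilizerHaar.integral_two_mul_re_star_dotProduct_mulVec_sq [IsProbabilityMeasure μ]
    (hμ : IsStabilizerHaar μ (vecMulVec ψ (star ψ))) (hψ : star ψ ⬝ᵥ ψ = 1)
    (hφ : star ψ ⬝ᵥ φ = 0) (hn : 2 ≤ Fintype.card n) {a : n → ℂ} (ha : star ψ ⬝ᵥ a = 0) :
    ∫ V, (2 * (star a ⬝ᵥ (V : Matrix n n ℂ) *ᵥ φ).re) ^ 2 ∂μ =
      2 * ((star φ ⬝ᵥ φ).re * (star a ⬝ᵥ a).re / (Fintype.card n - 1)) := by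
  have hsq : ∀ z : ℂ, (2 * z.re) ^ 2 = 2 * (z ^ 2).re + 2 * normSq z := fun z => by
    rw [sq z, mul_re, normSq_apply]
    ring
  simp only [hsq]
  rw [integral_add (Continuous.integrable_of_compactSpace (by fun_prop))
      (Continuous.integrable_of_compactSpace (by fun_prop)), integral_const_mul,
    integral_const_mul, integral_complex_re (Continuous.integrable_of_compactSpace (by fun_prop)),
    hμ.integral_star_dotProduct_mulVec_sq_eq_zero hψ hφ,
    hμ.integral_normSq_star_dotProduct_mulVec hψ hφ hn ha, zero_re, mul_zero, zero_add]

end SecondMoment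

section Loss

variable {n : Type*} [Fintype n] {ψ : ℝ → n → ℂ} {ψ' : n → ℂ} {t : ℝ}

theorem hasDerivAt_star_dotProduct_mulVec (A : Matrix n n ℂ) (h : HasDerivAt ψ ψ' t) :
    HasDerivAt (fun s => star (ψ s) ⬝ᵥ A *ᵥ ψ s)
      (star ψ' ⬝ᵥ A *ᵥ ψ t + star (ψ t) ⬝ᵥ A *ᵥ ψ') t := by
  have hc : ∀ i, HasDerivAt (fun s => ψ s i) (ψ' i) t := hasDerivAt_pi.mp h
  simp only [dotProduct, mulVec, Pi.star_apply, Finset.mul_sum, ← Finset.sum_add_distrib]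
  exact .fun_sum fun i _ => .fun_sum fun j _ =>
    ((hc i).star.fun_mul ((hc j).const_mul (A i j))).congr_deriv (by ring)

theorem hasDerivAt_re_star_dotProduct_mulVec {A : Matrix n n ℂ} (hA : A.IsHermitian)
    (h : HasDerivAt ψ ψ' t) :
    HasDerivAt (fun s => (star (ψ s) ⬝ᵥ A *ᵥ ψ s).re) (2 * (star (ψ t) ⬝ᵥ A *ᵥ ψ').re) t := by
  refine (reCLM.hasFDerivAt.comp_hasDerivAt t
    (hasDerivAt_star_dotProduct_mulVec A h)).congr_deriv ?_
  rw [star_dotProduct, star_mulVec, hA.eq, ← dotProduct_mulVec]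
  simp [two_mul]

theorem re_star_dotProduct_eq_zero_of_hasDerivAt [DecidableEq n]
    (hψ : ∀ s, star (ψ s) ⬝ᵥ ψ s = 1) (h : HasDerivAt ψ ψ' t) :
    (star (ψ t) ⬝ᵥ ψ').re = 0 := by
  have h₁ := hasDerivAt_re_star_dotProduct_mulVec isHermitian_one h
  simp only [one_mulVec, hψ, one_re] at h₁
  linarith [h₁.unique (hasDerivAt_const t 1)]

theorem re_star_dotProduct_conj_mulVec [DecidableEq n] {ψ₀ ψ' : n → ℂ} {H V : Matrix n n ℂ}
    (hψ₀ : star ψ₀ ⬝ᵥ ψ₀ = 1) (hψ' : (star ψ₀ ⬝ᵥ ψ').re = 0) (hH : H.IsHermitian)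
    (hVQ : V * vecMulVec ψ₀ (star ψ₀) = vecMulVec ψ₀ (star ψ₀))
    (hQV : vecMulVec ψ₀ (star ψ₀) * V = vecMulVec ψ₀ (star ψ₀)) :
    (star ψ₀ ⬝ᵥ (Vᴴ * H * V) *ᵥ ψ').re =
      (star ((1 - vecMulVec ψ₀ (star ψ₀)) *ᵥ H *ᵥ ψ₀) ⬝ᵥ
        V *ᵥ (1 - vecMulVec ψ₀ (star ψ₀)) *ᵥ ψ').re := by
  have hdec : ∀ x, x = (1 - vecMulVec ψ₀ (star ψ₀)) *ᵥ x + (star ψ₀ ⬝ᵥ x) • ψ₀ := fun x => by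
    rw [one_sub_vecMulVec_mulVec, sub_add_cancel]
  set a := (1 - vecMulVec ψ₀ (star ψ₀)) *ᵥ H *ᵥ ψ₀
  set φ := (1 - vecMulVec ψ₀ (star ψ₀)) *ᵥ ψ'
  set β := star ψ₀ ⬝ᵥ H *ᵥ ψ₀
  have ha : star a ⬝ᵥ ψ₀ = 0 := by
    rw [star_dotProduct, star_dotProduct_one_sub_vecMulVec_mulVec hψ₀, star_zero]
  have hφ : star ψ₀ ⬝ᵥ V *ᵥ φ = 0 := by
    rw [star_dotProduct_mulVec_of_vecMulVec_mul hψ₀ hQV,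
      star_dotProduct_one_sub_vecMulVec_mulVec hψ₀]
  have hβ : β.im = 0 := hH.im_star_dotProduct_mulVec_self ψ₀
  have hVψ₀ := mulVec_eq_self_of_mul_vecMulVec hψ₀ hVQ
  calc (star ψ₀ ⬝ᵥ (Vᴴ * H * V) *ᵥ ψ').re
      = (star (H *ᵥ ψ₀) ⬝ᵥ V *ᵥ ψ').re := by
        rw [← mulVec_mulVec, ← mulVec_mulVec, dotProduct_mulVec, ← star_mulVec, hVψ₀,
          dotProduct_mulVec, star_mulVec, hH.eq]
    _ = (star (a + β • ψ₀) ⬝ᵥ V *ᵥ (φ + (star ψ₀ ⬝ᵥ ψ') • ψ₀)).re := by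
        rw [← hdec, ← hdec]
    _ = (star a ⬝ᵥ V *ᵥ φ).re := by
        rw [star_add, star_smul, mulVec_add, mulVec_smul, hVψ₀]
        simp [add_dotProduct, dotProduct_add, ha, hφ, hψ₀, hβ, hψ']

theorem hasDerivAt_re_star_dotProduct_conj_mulVec [DecidableEq n] {H V : Matrix n n ℂ}
    (hH : H.IsHermitian) (hψ : ∀ s, star (ψ s) ⬝ᵥ ψ s = 1) (h : HasDerivAt ψ ψ' t)
    (hVQ : V * vecMulVec (ψ t) (star (ψ t)) = vecMulVec (ψ t) (star (ψ t)))
    (hQV : vecMulVec (ψ t) (star (ψ t)) * V = vecMulVec (ψ t) (star (ψ t))) :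
    HasDerivAt (fun s => (star (ψ s) ⬝ᵥ (Vᴴ * H * V) *ᵥ ψ s).re)
      (2 * (star ((1 - vecMulVec (ψ t) (star (ψ t))) *ᵥ H *ᵥ ψ t) ⬝ᵥ
        V *ᵥ (1 - vecMulVec (ψ t) (star (ψ t))) *ᵥ ψ').re) t := by
  have h' := hasDerivAt_re_star_dotProduct_mulVec (isHermitian_conjTranspose_mul_mul V hH) h
  rwa [re_star_dotProduct_conj_mulVec (hψ t) (re_star_dotProduct_eq_zero_of_hasDerivAt hψ h) hH
    hVQ hQV] at h'

end Loss

/-- **Gradient statistics of the local (energy) loss over the diagonalizing-unitary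
ensemble.** `ψ : ℝ → ℂ^d` is a differentiable family of unit vectors (variation along
the `μ`-th coordinate), `ψs = ψ t*`, and `V = |ψs⟩⟨ψs| + P W P` with `W` Haar-random on
the orthogonal complement `P` of `ψs` (so every `V` in the ensemble fixes `ψs`). For the
local loss `L(V, t) = ⟨ψ(t)|V† H V|ψ(t)⟩` with `H` Hermitian, `E[∂L at t*] = 0` and
`Var[∂L at t*] = ((⟨H²⟩* − ⟨H⟩*²)/(d−1)) F`, where `⟨·⟩* = ⟨ψs|·|ψs⟩` and
`F` is the diagonal QFI element at `t*`. -/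
theorem stmt19 (d : ℕ) (hd : 2 ≤ d)
    (tstar : ℝ) (ψ : ℝ → Fin d → ℂ)
    (hψdiff : DifferentiableAt ℝ ψ tstar)
    (hψunit : ∀ t, star (ψ t) ⬝ᵥ ψ t = 1)
    (ψs : Fin d → ℂ) (hψs : ψs = ψ tstar)
    (P : Matrix (Fin d) (Fin d) ℂ)
    (hPdef : P = 1 - Matrix.vecMulVec ψs (star ψs))
    (μ : Measure (Matrix.unitaryGroup (Fin d) ℂ)) [IsProbabilityMeasure μ]
    (hsupp : ∀ᵐ (V : Matrix.unitaryGroup (Fin d) ℂ) ∂μ,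
      (V : Matrix (Fin d) (Fin d) ℂ) * (1 - P) = 1 - P ∧
      (1 - P) * (V : Matrix (Fin d) (Fin d) ℂ) = 1 - P)
    (hinv : ∀ U : Matrix.unitaryGroup (Fin d) ℂ,
      (U : Matrix (Fin d) (Fin d) ℂ) * (1 - P) = 1 - P →
      (1 - P) * (U : Matrix (Fin d) (Fin d) ℂ) = 1 - P →
      μ.map (fun V => U * V) = μ)
    (H : Matrix (Fin d) (Fin d) ℂ) (hH : H.IsHermitian)
    (L : Matrix.unitaryGroup (Fin d) ℂ → ℝ → ℝ)
    (hL : ∀ (V : Matrix.unitaryGroup (Fin d) ℂ) (t : ℝ),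
      L V t = (star (ψ t) ⬝ᵥ
        (((V : Matrix (Fin d) (Fin d) ℂ))ᴴ * H * (V : Matrix (Fin d) (Fin d) ℂ)).mulVec
          (ψ t)).re)
    (F : ℝ)
    (hF : F = 2 * ((star (deriv ψ tstar) ⬝ᵥ deriv ψ tstar).re
      - Complex.normSq (star (deriv ψ tstar) ⬝ᵥ ψs))) :
    (∫ V, deriv (L V) tstar ∂μ) = 0 ∧
    (∫ V, (deriv (L V) tstar - ∫ W, deriv (L W) tstar ∂μ) ^ 2 ∂μ)
      = (((star ψs ⬝ᵥ (H * H).mulVec ψs).re - ((star ψs ⬝ᵥ H.mulVec ψs).re) ^ 2)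
          / ((d : ℝ) - 1)) * F := by
  subst hψs hPdef
  have hψ₀ := hψunit tstar
  have hperp := star_dotProduct_one_sub_vecMulVec_mulVec hψ₀
  rw [sub_sub_cancel] at hsupp hinv
  have hμ : IsStabilizerHaar μ (vecMulVec (ψ tstar) (star (ψ tstar))) := ⟨hsupp, hinv⟩
  have hderiv : ∀ᵐ V ∂μ, deriv (L V) tstar =
      2 * (star ((1 - vecMulVec (ψ tstar) (star (ψ tstar))) *ᵥ H *ᵥ ψ tstar) ⬝ᵥ
        (V : Matrix (Fin d) (Fin d) ℂ) *ᵥ (1 - vecMulVec (ψ tstar) (star (ψ tstar))) *ᵥ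
          deriv ψ tstar).re := by
    filter_upwards [hμ.ae_fixes] with V hV
    rw [show L V = _ from funext (hL V)]
    exact (hasDerivAt_re_star_dotProduct_conj_mulVec hH hψunit hψdiff.hasDerivAt hV.1 hV.2).deriv
  have hmean := (integral_congr_ae hderiv).trans
    (hμ.integral_two_mul_re_star_dotProduct_mulVec hψ₀ (hperp _) _)
  refine ⟨hmean, ?_⟩
  rw [hmean, integral_congr_ae (hderiv.mono fun V hV => by rw [hV, sub_zero]),
    hμ.integral_two_mul_re_star_dotProduct_mulVec_sq hψ₀ (hperp _) (by simpa using hd) (hperp _),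
    re_star_dotProduct_one_sub_vecMulVec_mulVec_self hψ₀,
    hH.re_star_dotProduct_one_sub_vecMulVec_mulVec_self hψ₀, Fintype.card_fin, hF]
  ring
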